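/- arXiv:2301.04645 — 4 statements merged into one kernel-verified Lean document; each statement's English description precedes it below -/
import Mathlib

section
/- The Korányi norm ‖(z,t)‖_ℍ = (|z|⁴ + 16t²)^{1/4} on the Heisenberg group satisfies the triangle-type inequality ‖p ∗ q‖_ℍ ≤ ‖p‖_ℍ + ‖q‖_ℍ for all p, q ∈ ℍ, so that d_ℍ(p,q) = ‖q⁻¹ ∗ p‖_ℍ is a metric. -/
open MeasureTheory Real ENNReal NNReal

/-- The Heisenberg group as a set: ℝ³ ≅ ℂ × ℝ. -/
abbrev H : Type := ℝ × ℝ × ℝ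

/-- Heisenberg group law. -/
noncomputable def hmul (p q : H) : H :=
  (p.1 + q.1, p.2.1 + q.2.1,
    p.2.2 + q.2.2 + (p.1 * q.2.1 - p.2.1 * q.1) / 2)

/-- Heisenberg inverse. -/
def hinv (p : H) : H := (-p.1, -p.2.1, -p.2.2)

/-- Korányi norm. -/
noncomputable def knorm (p : H) : ℝ :=
  ((p.1 ^ 2 + p.2.1 ^ 2) ^ 2 + 16 * p.2.2 ^ 2) ^ ((1 : ℝ) / 4)

/-- Korányi distance. -/
noncomputable def dH (p q : H) : ℝ := knorm (hmul (hinv q) p)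

/-- Heisenberg dilation. -/
noncomputable def dil (l : ℝ) (p : H) : H := (l * p.1, l * p.2.1, l ^ 2 * p.2.2)

/-- Horizontal subgroup 𝕍_θ. -/
noncomputable def V (θ : ℝ) : Set H :=
  {p | ∃ l : ℝ, p = (l * Real.cos θ, l * Real.sin θ, 0)}

/-- Vertical plane 𝕍_θ^⊥. -/
noncomputable def Vperp (θ : ℝ) : Set H :=
  {p | ∃ m s : ℝ, p = (-m * Real.sin θ, m * Real.cos θ, s)}

/-- Dual line ℓ*(x,y,t) = (0,x,t−xy/2) + ℝ·(1,−y,y²/2). -/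
noncomputable def lstar (p : H) : Set (ℝ × ℝ × ℝ) :=
  {q | ∃ l : ℝ, q = (l, p.1 - l * p.2.1, p.2.2 - p.1 * p.2.1 / 2 + l * p.2.1 ^ 2 / 2)}

/-- Horizontal line ℓ(a,b,c). -/
noncomputable def lline (p : ℝ × ℝ × ℝ) : Set H :=
  {q | ∃ s : ℝ, q = (p.1 * s + p.2.1, s, p.2.2 + p.2.1 * s / 2)}

/-- Euclidean norm on ℝ³. -/
noncomputable def enorm3 (p : ℝ × ℝ × ℝ) : ℝ :=
  Real.sqrt (p.1 ^ 2 + p.2.1 ^ 2 + p.2.2 ^ 2)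

/-- Explicit formula for the vertical projection P_{𝕍_θ^⊥}. -/
noncomputable def Pproj (θ : ℝ) (p : H) : H :=
  (p.1 - (p.1 * Real.cos θ + p.2.1 * Real.sin θ) * Real.cos θ,
   p.2.1 - (p.1 * Real.cos θ + p.2.1 * Real.sin θ) * Real.sin θ,
   p.2.2 - ((p.1 * Real.cos θ + p.2.1 * Real.sin θ) * Real.sin θ *
        (p.1 - (p.1 * Real.cos θ + p.2.1 * Real.sin θ) * Real.cos θ) -
      (p.1 * Real.cos θ + p.2.1 * Real.sin θ) * Real.cos θ *
        (p.2.1 - (p.1 * Real.cos θ + p.2.1 * Real.sin θ) * Real.sin θ)) / 2)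

/-- 2-dimensional Lebesgue (Hausdorff) measure ℋ²_E on the plane 𝕍_θ^⊥,
realised as a measure on ℝ³ via the parametrization (μ,s) ↦ (−μ sinθ, μ cosθ, s). -/
noncomputable def planeMeasure (θ : ℝ) : Measure H :=
  Measure.map (fun ms : ℝ × ℝ => ((-ms.1 * Real.sin θ, ms.1 * Real.cos θ, ms.2) : H))
    (volume : Measure (ℝ × ℝ))

/-- Horizontal X-ray transform of `f` along the horizontal line `w ∗ 𝕍_θ`,
with respect to 1-dimensional Korányi Hausdorff measure (which on a horizontal
line is the pushforward of Lebesgue measure under arclength parametrization). -/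
noncomputable def XH (f : H → ℝ) (w : H) (θ : ℝ) : ℝ≥0∞ :=
  ∫⁻ l : ℝ, ENNReal.ofReal (f (hmul w (l * Real.cos θ, l * Real.sin θ, 0)))

/-- ‖P_{𝕍_θ^⊥#} μ‖_{L^q(ℋ²_E)}^q, computed via the Radon–Nikodym density of the
pushforward with respect to ℋ²_E on 𝕍_θ^⊥. -/
noncomputable def projNormPow (θ : ℝ) (μ : Measure H) (q : ℝ) : ℝ≥0∞ :=
  ∫⁻ w, ((μ.map (Pproj θ)).rnDeriv (planeMeasure θ) w) ^ q ∂(planeMeasure θ)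

/-- Korányi ball. -/
noncomputable def kball (x : H) (r : ℝ) : Set H := {p | dH p x < r}

/-- Frostman constant c_α(ν). -/
noncomputable def frostman (α : ℝ) (ν : Measure H) : ℝ≥0∞ :=
  ⨆ (x : H) (r : ℝ) (_ : 0 < r), ν (kball x r) / ENNReal.ofReal (r ^ α)

/-- Truncated Frostman constant c_{α,δ}(ν). -/
noncomputable def frostmanTrunc (α δ : ℝ) (ν : Measure H) : ℝ≥0∞ :=
  ⨆ (x : H) (r : ℝ) (_ : δ < r), ν (kball x r) / ENNReal.ofReal (r ^ α)

/-
With z = x + iy, the gauge g(z,t) = |z|² + 4it ∈ ℂ satisfies ‖p‖_ℍ² = |g(p)|, and the group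
law becomes g(p ∗ q) = g(p) + g(q) + 2 z̄w for p = (z,t), q = (w,τ). The triangle inequality in ℂ
and |z|² = Re g(p) ≤ ‖p‖_ℍ² give ‖p ∗ q‖_ℍ² ≤ ‖p‖_ℍ² + ‖q‖_ℍ² + 2‖p‖_ℍ‖q‖_ℍ. The metric
axioms for d_ℍ then follow from the group laws and ‖p⁻¹‖_ℍ = ‖p‖_ℍ.
-/

open ComplexConjugate

def horiz (p : H) : ℂ := ⟨p.1, p.2.1⟩

def koranyiGauge (p : H) : ℂ := ⟨p.1 ^ 2 + p.2.1 ^ 2, 4 * p.2.2⟩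

lemma sq_norm_horiz (p : H) : ‖horiz p‖ ^ 2 = (koranyiGauge p).re := by
  rw [horiz, Complex.sq_norm, Complex.normSq_mk, koranyiGauge]
  ring

lemma koranyiGauge_hmul (p q : H) :
    koranyiGauge (hmul p q) = koranyiGauge p + koranyiGauge q + 2 * conj (horiz p) * horiz q := by
  apply Complex.ext <;> simp [koranyiGauge, horiz, hmul] <;> ring

lemma knorm_nonneg (p : H) : 0 ≤ knorm p :=
  Real.rpow_nonneg (by positivity) _

lemma sq_knorm (p : H) : knorm p ^ 2 = ‖koranyiGauge p‖ := by
  rw [knorm, ← Real.rpow_natCast, ← Real.rpow_mul (by positivity), koranyiGauge,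
    Complex.norm_def, Complex.normSq_mk, Real.sqrt_eq_rpow]
  norm_num
  ring_nf

lemma norm_horiz_le_knorm (p : H) : ‖horiz p‖ ≤ knorm p := by
  rw [← pow_le_pow_iff_left₀ (norm_nonneg _) (knorm_nonneg p) two_ne_zero, sq_norm_horiz,
    sq_knorm]
  exact Complex.re_le_norm _

lemma knorm_hmul_le (p q : H) : knorm (hmul p q) ≤ knorm p + knorm q := by
  rw [← pow_le_pow_iff_left₀ (knorm_nonneg _) (by positivity [knorm_nonneg p, knorm_nonneg q])
    two_ne_zero]
  calc knorm (hmul p q) ^ 2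
      = ‖koranyiGauge p + koranyiGauge q + 2 * conj (horiz p) * horiz q‖ := by
        rw [sq_knorm, koranyiGauge_hmul]
    _ ≤ ‖koranyiGauge p‖ + ‖koranyiGauge q‖ + 2 * (‖horiz p‖ * ‖horiz q‖) := by
        refine (norm_add_le _ _).trans (add_le_add (norm_add_le _ _) ?_)
        simp [mul_assoc]
    _ ≤ knorm p ^ 2 + knorm q ^ 2 + 2 * (knorm p * knorm q) := by
        rw [sq_knorm, sq_knorm]
        have := mul_le_mul (norm_horiz_le_knorm p) (norm_horiz_le_knorm q) (norm_nonneg _)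
          (knorm_nonneg p)
        linarith
    _ = (knorm p + knorm q) ^ 2 := by ring

lemma knorm_eq_zero_iff (p : H) : knorm p = 0 ↔ p = 0 := by
  rw [← sq_eq_zero_iff, sq_knorm, norm_eq_zero]
  constructor
  · intro h
    have hre : p.1 ^ 2 + p.2.1 ^ 2 = 0 := congrArg Complex.re h
    have him : 4 * p.2.2 = 0 := congrArg Complex.im h
    ext <;> simp <;> nlinarith [sq_nonneg p.1, sq_nonneg p.2.1]
  · rintro rfl
    simp [koranyiGauge, Complex.ext_iff]

lemma knorm_hinv (p : H) : knorm (hinv p) = knorm p := by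
  simp [knorm, hinv]

lemma hmul_assoc (p q r : H) : hmul (hmul p q) r = hmul p (hmul q r) := by
  ext <;> simp only [hmul] <;> ring

lemma hmul_zero (p : H) : hmul p 0 = p := by
  simp [hmul]

lemma hinv_hmul_cancel (p : H) : hmul (hinv p) p = 0 := by
  ext <;> simp only [hmul, hinv, Prod.fst_zero, Prod.snd_zero] <;> ring

lemma hmul_hinv_cancel_left (p q : H) : hmul p (hmul (hinv p) q) = q := by
  ext <;> simp only [hmul, hinv] <;> ring

lemma hinv_hmul_rev (p q : H) : hinv (hmul p q) = hmul (hinv q) (hinv p) := by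
  ext <;> simp only [hmul, hinv] <;> ring

lemma hinv_hinv (p : H) : hinv (hinv p) = p := by
  simp [hinv]

lemma hinv_hmul_eq_zero_iff (p q : H) : hmul (hinv q) p = 0 ↔ p = q := by
  refine ⟨fun h => ?_, fun h => h ▸ hinv_hmul_cancel p⟩
  rw [← hmul_hinv_cancel_left q p, h, hmul_zero]

lemma dH_comm (p q : H) : dH p q = dH q p := by
  rw [dH, dH, ← knorm_hinv, hinv_hmul_rev, hinv_hinv]

lemma dH_triangle (p q r : H) : dH p r ≤ dH p q + dH q r := by
  calc dH p r = knorm (hmul (hmul (hinv r) q) (hmul (hinv q) p)) := by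
        rw [dH, hmul_assoc, hmul_hinv_cancel_left]
    _ ≤ dH q r + dH p q := knorm_hmul_le _ _
    _ = dH p q + dH q r := add_comm _ _

/-- the Korányi norm satisfies the triangle-type inequality
‖p∗q‖ ≤ ‖p‖ + ‖q‖, so that d_ℍ(p,q) = ‖q⁻¹∗p‖ is a metric. -/
theorem koranyi_triangle_inequality :
    (∀ p q : H, knorm (hmul p q) ≤ knorm p + knorm q) ∧
    (∀ p q : H, dH p q = 0 ↔ p = q) ∧
    (∀ p q : H, dH p q = dH q p) ∧
    (∀ p q r : H, dH p r ≤ dH p q + dH q r) :=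
  ⟨knorm_hmul_le, fun p q => (knorm_eq_zero_iff _).trans (hinv_hmul_eq_zero_iff p q), dH_comm,
    dH_triangle⟩
end

section
/- Point-line duality: for p = (a,b,c) ∈ ℝ³ and p* = (x,y,t) ∈ ℍ, the point p lies on the line ℓ*(x,y,t) = (0,x,t−xy/2) + ℝ·(1,−y,y²/2) if and only if the point p* lies on the horizontal line ℓ(a,b,c) = {(as+b, s, c+bs/2) : s ∈ ℝ}. -/
open MeasureTheory Real ENNReal NNReal

theorem mem_lstar_iff {a b c x y t : ℝ} :
    (a, b, c) ∈ lstar (x, y, t) ↔ b = x - a * y ∧ c = t - x * y / 2 + a * y ^ 2 / 2 := by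
  constructor
  · rintro ⟨l, hl⟩
    simp only [Prod.mk.injEq] at hl
    obtain ⟨rfl, rfl, rfl⟩ := hl
    exact ⟨rfl, rfl⟩
  · rintro ⟨rfl, rfl⟩
    exact ⟨a, rfl⟩

theorem mem_lline_iff {a b c x y t : ℝ} :
    (x, y, t) ∈ lline (a, b, c) ↔ x = a * y + b ∧ t = c + b * y / 2 := by
  constructor
  · rintro ⟨s, hs⟩
    simp only [Prod.mk.injEq] at hs
    obtain ⟨rfl, rfl, rfl⟩ := hs
    exact ⟨rfl, rfl⟩
  · rintro ⟨rfl, rfl⟩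
    exact ⟨y, rfl⟩

/-- point-line duality: p ∈ ℓ*(p*) if and only if p* ∈ ℓ(p). -/
theorem point_line_duality (p : ℝ × ℝ × ℝ) (pstar : H) :
    p ∈ lstar pstar ↔ pstar ∈ lline p := by
  obtain ⟨a, b, c⟩ := p
  obtain ⟨x, y, t⟩ := pstar
  rw [mem_lstar_iff, mem_lline_iff]
  constructor
  · rintro ⟨rfl, rfl⟩
    constructor <;> ring
  · rintro ⟨rfl, rfl⟩
    constructor <;> ring
end

section
/- There is a constant C > 0 such that for every (x,y,t) in the unit Korányi ball of ℍ and every δ > 0, the Euclidean δ-neighbourhood of the line ℓ*(x,y,t) in ℝ³ is contained in the union ⋃{ℓ*(x',y',t') : (x',y',t') ∈ B_E((x,y,t), Cδ)}, where B_E denotes the Euclidean ball. -/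
open MeasureTheory Real ENNReal NNReal

/-- Dual lines with a common `y` are parallel: translating one by `e` gives the dual line whose
base point is moved by this offset, which is `O(|e|)` as long as `|y| ≤ 1`. -/
noncomputable def lstarOffset (y : ℝ) (e : ℝ × ℝ × ℝ) : H :=
  (e.2.1 + e.1 * y, 0, e.2.2 + e.2.1 * y / 2)

theorem add_mem_lstar_add_offset {p : H} {r : ℝ × ℝ × ℝ} (hr : r ∈ lstar p)
    (e : ℝ × ℝ × ℝ) : r + e ∈ lstar (p + lstarOffset p.2.1 e) := by
  obtain ⟨l, rfl⟩ := hr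
  refine ⟨l + e.1, ?_⟩
  ext <;> simp only [lstarOffset, Prod.fst_add, Prod.snd_add] <;> ring

theorem enorm3_lstarOffset_le {y : ℝ} (hy : y ^ 2 ≤ 1) (e : ℝ × ℝ × ℝ) :
    enorm3 (lstarOffset y e) ≤ 2 * enorm3 e := by
  obtain ⟨e₁, e₂, e₃⟩ := e
  have hsq : 0 ≤ e₁ ^ 2 + e₂ ^ 2 + e₃ ^ 2 := by positivity
  rw [enorm3, Real.sqrt_le_iff, enorm3, mul_pow, Real.sq_sqrt hsq]
  refine ⟨by positivity, ?_⟩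
  simp only [lstarOffset]
  nlinarith [sq_nonneg (e₂ - e₁ * y), sq_nonneg (e₃ - e₂ * y / 2),
    mul_le_mul_of_nonneg_left hy (sq_nonneg e₁),
    mul_le_mul_of_nonneg_left hy (sq_nonneg e₂)]

theorem sq_snd_le_one_of_knorm_lt_one {p : H} (hp : knorm p < 1) : p.2.1 ^ 2 ≤ 1 := by
  obtain ⟨x, y, t⟩ := p
  have hbase : (x ^ 2 + y ^ 2) ^ 2 + 16 * t ^ 2 < 1 := by
    by_contra! h
    exact hp.not_ge (Real.one_le_rpow h (by norm_num))
  nlinarith [sq_nonneg x, sq_nonneg y, sq_nonneg t]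

/-- ∃ C > 0 such that for (x,y,t) in the Korányi unit ball and
δ > 0, the Euclidean δ-neighbourhood of ℓ*(x,y,t) is contained in
ℓ*(B_E((x,y,t), Cδ)). -/
theorem dual_line_neighbourhood_in_dual_ball :
    ∃ C > (0 : ℝ), ∀ p : H, knorm p < 1 → ∀ δ > (0 : ℝ),
      {q : ℝ × ℝ × ℝ | ∃ r ∈ lstar p, enorm3 (q - r) < δ} ⊆
        {q : ℝ × ℝ × ℝ | ∃ p' : H, enorm3 (p' - p) < C * δ ∧ q ∈ lstar p'} := by
  refine ⟨2, two_pos, fun p hp δ _ q ⟨r, hr, hqr⟩ => ⟨p + lstarOffset p.2.1 (q - r), ?_, ?_⟩⟩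
  · calc enorm3 (p + lstarOffset p.2.1 (q - r) - p)
        = enorm3 (lstarOffset p.2.1 (q - r)) := by rw [add_sub_cancel_left]
      _ ≤ 2 * enorm3 (q - r) := enorm3_lstarOffset_le (sq_snd_le_one_of_knorm_lt_one hp) _
      _ < 2 * δ := by gcongr
  · simpa using add_mem_lstar_add_offset hr (q - r)
end

section
/- There is a constant C > 0 such that for every (x,y,t) in the Korányi unit ball and every δ > 0, the intersection of the Euclidean ball B_E(0,100) ⊂ ℝ³ with ⋃{ℓ*(x',y',t') : |(x',y',t') − (x,y,t)| < δ} is contained in the Euclidean Cδ-neighbourhood of ℓ*(x,y,t). -/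
open MeasureTheory Real ENNReal NNReal

/-! Parametrise `ℓ*(x,y,t)` as `λ ↦ (λ, x − λy, t − xy/2 + λy²/2)` and compare a point of `ℓ*(p')`
with the point of `ℓ*(p)` at the same parameter `λ`. Inside `B_E(0,100)` we have `|λ| ≤ 100`, and the
Korányi unit ball lies in the cube `[-1,1]³`, so the second coordinates differ by at most `101δ`. For
`δ ≤ 1` the third coordinates differ by `O(δ)` because `xy` and `y²` are Lipschitz on a bounded set;
for `δ ≥ 1` both third coordinates are simply `O(1)`. -/

lemma abs_coords_le_enorm3 (v : ℝ × ℝ × ℝ) :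
    |v.1| ≤ enorm3 v ∧ |v.2.1| ≤ enorm3 v ∧ |v.2.2| ≤ enorm3 v := by
  refine ⟨Real.abs_le_sqrt ?_, Real.abs_le_sqrt ?_, Real.abs_le_sqrt ?_⟩ <;>
    nlinarith [sq_nonneg v.1, sq_nonneg v.2.1, sq_nonneg v.2.2]

lemma enorm3_le_abs_add_abs_add_abs (v : ℝ × ℝ × ℝ) :
    enorm3 v ≤ |v.1| + |v.2.1| + |v.2.2| := by
  refine Real.sqrt_le_iff.2 ⟨by positivity, ?_⟩
  nlinarith [sq_abs v.1, sq_abs v.2.1, sq_abs v.2.2, abs_nonneg v.1, abs_nonneg v.2.1,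
    abs_nonneg v.2.2, mul_nonneg (abs_nonneg v.1) (abs_nonneg v.2.1),
    mul_nonneg (abs_nonneg v.1) (abs_nonneg v.2.2),
    mul_nonneg (abs_nonneg v.2.1) (abs_nonneg v.2.2)]

lemma abs_coords_le_one_of_knorm_lt_one {p : H} (hp : knorm p < 1) :
    |p.1| ≤ 1 ∧ |p.2.1| ≤ 1 ∧ |p.2.2| ≤ 1 := by
  have h4 : (p.1 ^ 2 + p.2.1 ^ 2) ^ 2 + 16 * p.2.2 ^ 2 < 1 :=
    (Real.rpow_lt_one_iff' (by positivity) (by norm_num)).1 hp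
  have hxy : p.1 ^ 2 + p.2.1 ^ 2 ≤ 1 := by
    nlinarith [sq_nonneg (p.1 ^ 2 + p.2.1 ^ 2 - 1), sq_nonneg p.2.2]
  simp only [← sq_le_one_iff_abs_le_one]
  refine ⟨?_, ?_, ?_⟩ <;> nlinarith [sq_nonneg p.1, sq_nonneg p.2.1, sq_nonneg p.2.2]

section DualLineCoordinates

variable {x y t x' y' t' l L δ : ℝ}

lemma abs_dual_line_snd_sub_le (hl : |l| ≤ L) (hdx : |x' - x| ≤ δ) (hdy : |y' - y| ≤ δ) :
    |(x' - l * y') - (x - l * y)| ≤ (1 + L) * δ :=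
  calc |(x' - l * y') - (x - l * y)| = |(x' - x) - l * (y' - y)| := by ring_nf
    _ ≤ |x' - x| + |l| * |y' - y| := (abs_sub _ _).trans_eq (by rw [abs_mul])
    _ ≤ δ + L * δ := by gcongr; exact (abs_nonneg _).trans hl
    _ = (1 + L) * δ := by ring

lemma abs_dual_line_thd_sub_le_of_le_one (hδ : δ ≤ 1) (hx : |x| ≤ 1) (hy : |y| ≤ 1)
    (hl : |l| ≤ L) (hdx : |x' - x| ≤ δ) (hdy : |y' - y| ≤ δ) (hdt : |t' - t| ≤ δ) :
    |(t' - x' * y' / 2 + l * y' ^ 2 / 2) - (t - x * y / 2 + l * y ^ 2 / 2)| ≤ (2 * L + 3) * δ := by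
  have hL : 0 ≤ L := (abs_nonneg _).trans hl
  have hx' : |x'| ≤ 2 := by linarith [abs_sub_abs_le_abs_sub x' x]
  have hyy' : |y' + y| ≤ 3 := by linarith [abs_sub_abs_le_abs_sub y' y, abs_add_le y' y]
  have hxy : |x' * y' - x * y| ≤ 3 * δ :=
    calc |x' * y' - x * y| = |x' * (y' - y) + y * (x' - x)| := by ring_nf
      _ ≤ |x'| * |y' - y| + |y| * |x' - x| := (abs_add_le _ _).trans_eq (by rw [abs_mul, abs_mul])
      _ ≤ 2 * δ + 1 * δ := by gcongr
      _ = 3 * δ := by ring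
  have hyy : |y' ^ 2 - y ^ 2| ≤ 3 * δ :=
    calc |y' ^ 2 - y ^ 2| = |y' + y| * |y' - y| := by rw [← abs_mul]; ring_nf
      _ ≤ 3 * δ := by gcongr
  calc |(t' - x' * y' / 2 + l * y' ^ 2 / 2) - (t - x * y / 2 + l * y ^ 2 / 2)|
      = |(t' - t) - (x' * y' - x * y) / 2 + l * (y' ^ 2 - y ^ 2) / 2| := by ring_nf
    _ ≤ |t' - t| + |x' * y' - x * y| / 2 + |l| * |y' ^ 2 - y ^ 2| / 2 := by
      have := abs_add_le ((t' - t) - (x' * y' - x * y) / 2) (l * (y' ^ 2 - y ^ 2) / 2)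
      have := abs_sub (t' - t) ((x' * y' - x * y) / 2)
      simp only [abs_div, abs_mul, abs_two] at *
      linarith
    _ ≤ δ + 3 * δ / 2 + L * (3 * δ) / 2 := by gcongr
    _ ≤ (2 * L + 3) * δ := by
      have hδ0 : 0 ≤ δ := (abs_nonneg _).trans hdt
      nlinarith [mul_nonneg hL hδ0]

lemma abs_dual_line_thd_sub_le_of_one_le (hδ : 1 ≤ δ) (hx : |x| ≤ 1) (hy : |y| ≤ 1)
    (ht : |t| ≤ 1) (hl : |l| ≤ L) (hq : |t' - x' * y' / 2 + l * y' ^ 2 / 2| ≤ L) :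
    |(t' - x' * y' / 2 + l * y' ^ 2 / 2) - (t - x * y / 2 + l * y ^ 2 / 2)| ≤ (2 * L + 3) * δ := by
  have hL : 0 ≤ L := (abs_nonneg _).trans hl
  have hxy : |x * y| ≤ 1 := by rw [abs_mul]; nlinarith [abs_nonneg x, abs_nonneg y]
  have hly : |l * y ^ 2| ≤ L := by
    rw [abs_mul, abs_pow]
    exact (mul_le_of_le_one_right (abs_nonneg l) (pow_le_one₀ (abs_nonneg y) hy)).trans hl
  have hr : |t - x * y / 2 + l * y ^ 2 / 2| ≤ L + 3 := by
    have := abs_add_le (t - x * y / 2) (l * y ^ 2 / 2)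
    have := abs_sub t (x * y / 2)
    rw [abs_div, abs_two] at *
    linarith
  calc _ ≤ L + (L + 3) := (abs_sub _ _).trans (add_le_add hq hr)
    _ ≤ (2 * L + 3) * δ := by nlinarith

lemma abs_dual_line_thd_sub_le (hx : |x| ≤ 1) (hy : |y| ≤ 1) (ht : |t| ≤ 1) (hl : |l| ≤ L)
    (hdx : |x' - x| ≤ δ) (hdy : |y' - y| ≤ δ) (hdt : |t' - t| ≤ δ)
    (hq : |t' - x' * y' / 2 + l * y' ^ 2 / 2| ≤ L) :
    |(t' - x' * y' / 2 + l * y' ^ 2 / 2) - (t - x * y / 2 + l * y ^ 2 / 2)| ≤ (2 * L + 3) * δ := by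
  rcases le_total δ 1 with hδ | hδ
  · exact abs_dual_line_thd_sub_le_of_le_one hδ hx hy hl hdx hdy hdt
  · exact abs_dual_line_thd_sub_le_of_one_le hδ hx hy ht hl hq

end DualLineCoordinates

/-- ∃ C > 0 such that for (x,y,t) in the Korányi unit ball and
δ > 0, B_E(0,100) ∩ ℓ*(B_E((x,y,t),δ)) is contained in the Euclidean
Cδ-neighbourhood of ℓ*(x,y,t). -/
theorem dual_ball_in_dual_line_neighbourhood :
    ∃ C > (0 : ℝ), ∀ p : H, knorm p < 1 → ∀ δ > (0 : ℝ),
      {q : ℝ × ℝ × ℝ | enorm3 q < 100 ∧ ∃ p' : H, enorm3 (p' - p) < δ ∧ q ∈ lstar p'} ⊆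
        {q : ℝ × ℝ × ℝ | ∃ r ∈ lstar p, enorm3 (q - r) < C * δ} := by
  refine ⟨305, by norm_num, ?_⟩
  rintro ⟨x, y, t⟩ hp δ hδ _ ⟨hq, ⟨x', y', t'⟩, hpp', l, rfl⟩
  simp only [Prod.mk_sub_mk] at hpp' ⊢
  obtain ⟨hx, hy, ht⟩ : |x| ≤ 1 ∧ |y| ≤ 1 ∧ |t| ≤ 1 := abs_coords_le_one_of_knorm_lt_one hp
  obtain ⟨hdx, hdy, hdt⟩ : |x' - x| ≤ δ ∧ |y' - y| ≤ δ ∧ |t' - t| ≤ δ := by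
    have := abs_coords_le_enorm3 (x' - x, y' - y, t' - t)
    exact ⟨this.1.trans hpp'.le, this.2.1.trans hpp'.le, this.2.2.trans hpp'.le⟩
  obtain ⟨hl, hq3⟩ : |l| ≤ 100 ∧ |t' - x' * y' / 2 + l * y' ^ 2 / 2| ≤ 100 := by
    have := abs_coords_le_enorm3 (l, x' - l * y', t' - x' * y' / 2 + l * y' ^ 2 / 2)
    exact ⟨this.1.trans hq.le, this.2.2.trans hq.le⟩
  refine ⟨(l, x - l * y, t - x * y / 2 + l * y ^ 2 / 2), ⟨l, rfl⟩, ?_⟩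
  calc enorm3 (l - l, (x' - l * y') - (x - l * y),
        (t' - x' * y' / 2 + l * y' ^ 2 / 2) - (t - x * y / 2 + l * y ^ 2 / 2))
      ≤ |l - l| + |(x' - l * y') - (x - l * y)|
        + |(t' - x' * y' / 2 + l * y' ^ 2 / 2) - (t - x * y / 2 + l * y ^ 2 / 2)| :=
        enorm3_le_abs_add_abs_add_abs _
    _ ≤ 0 + (1 + 100) * δ + (2 * 100 + 3) * δ := by
        rw [sub_self, abs_zero]
        gcongr
        · exact abs_dual_line_snd_sub_le hl hdx hdy
        · exact abs_dual_line_thd_sub_le hx hy ht hl hdx hdy hdt hq3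
    _ < 305 * δ := by linarith
end
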